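/- arXiv:1406.6910 — 2 statements merged into one kernel-verified Lean document; each statement's English description precedes it below -/
import Mathlib

section
/- For every s ∈ [0, √2], the forward orbit of s under f is eventually periodic — that is, there exist natural numbers m < n with f^(m)(s) = f^(n)(s) — if and only if s ∈ ℚ(√2). -/
noncomputable section

/-- `β = √2 - 1`. -/
def β : ℝ := Real.sqrt 2 - 1

/-- `ω = √2 + 1`. -/
def ω : ℝ := Real.sqrt 2 + 1

/-- The break points `Δ_i`. -/
def Δ (i : ℤ) : ℝ :=
  if i < 0 then β ^ i.natAbs
  else if i = 0 then β
  else Real.sqrt 2 - β ^ i.natAbs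

/-- The intervals `I_i`. -/
def Iint (i : ℤ) : Set ℝ :=
  if i < 0 then Set.Ioc (Δ (i - 1)) (Δ i)
  else if i = 0 then Set.Ioo β 1
  else Set.Ico (Δ i) (Δ (i + 1))

/-- The defining formula of `f` on the interval `I_i`. -/
def fval (i : ℤ) (s : ℝ) : ℝ :=
  if i < 0 then ω ^ (i.natAbs + 1) * (Δ i - s)
  else if i = 0 then ω * (s - β)
  else ω ^ (i.natAbs + 1) * (s - Δ i)

/-- `f` is the renormalization map: `f 0 = f √2 = 0` and on each interval `I_i`
    it is given by the corresponding affine formula. These conditions determine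
    `f` uniquely on `[0, √2]`. -/
def IsLuroth (f : ℝ → ℝ) : Prop :=
  f 0 = 0 ∧ f (Real.sqrt 2) = 0 ∧ ∀ i : ℤ, ∀ s ∈ Iint i, f s = fval i s

/-- `ℚ(√2)` as a subset of `ℝ`. -/
def QSqrt2 : Set ℝ := {x | ∃ a b : ℚ, x = (a : ℝ) + (b : ℝ) * Real.sqrt 2}

/-- `ℤ[√2]` as a subset of `ℝ`. -/
def ZSqrt2 : Set ℝ := {x | ∃ m n : ℤ, x = (m : ℝ) + (n : ℝ) * Real.sqrt 2}

/-- `M_d = {s ∈ [0,√2] : d·s ∈ ℤ[√2]}`. -/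
def Mset (d : ℤ) : Set ℝ :=
  {s | s ∈ Set.Icc 0 (Real.sqrt 2) ∧ (d : ℝ) * s ∈ ZSqrt2}

/-!
On each interval `I_i` the map `f` is affine, `s ↦ a s + c`, with slope `a = ±ω^k` (`k ≥ 1`), a
unit of `ℤ[√2]`, and `c ∈ ℤ[√2]`; the endpoints fit the same pattern. So every iterate `f^[j]` is
affine over `ℤ[√2]` with slope of modulus at least `ω^j`: a periodic point solves a nondegenerate
linear equation over `ℚ(√2)`, and `s` is recovered from `f^[m] s` by inverting an affine map.

Conversely, if `d s ∈ ℤ[√2]` then `d f^[j] s ∈ ℤ[√2]` for all `j`. Under the conjugation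
`√2 ↦ -√2` the slope `±ω^k` becomes `±(-β)^k`, a contraction, so the conjugates of `d f^[j] s`
stay bounded. An element of `ℤ[√2]` is determined by its two real embeddings, so the orbit lies in
a finite set.
-/

open Set

lemma sqrt_two_mul_self : √2 * √2 = 2 := Real.mul_self_sqrt zero_le_two

lemma β_pos : 0 < β := by simp only [β]; linarith [Real.one_lt_sqrt_two]

lemma β_lt_one : β < 1 := by simp only [β]; linarith [Real.sqrt_two_lt_three_halves]

lemma one_lt_ω : 1 < ω := by simp only [ω]; linarith [Real.one_lt_sqrt_two]

lemma ω_pos : 0 < ω := one_pos.trans one_lt_ω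

lemma β_mul_ω : β * ω = 1 := by simp only [β, ω]; linear_combination sqrt_two_mul_self

lemma ω_pow_mul_β_pow (n : ℕ) : ω ^ n * β ^ n = 1 := by
  rw [← mul_pow, mul_comm, β_mul_ω, one_pow]

lemma ω_pow_succ_mul_β_pow (n : ℕ) : ω ^ (n + 1) * β ^ n = ω := by
  rw [pow_succ, mul_right_comm, ω_pow_mul_β_pow, one_mul]

lemma ω_le_ω_pow_succ (n : ℕ) : ω ≤ ω ^ (n + 1) :=
  le_self_pow₀ one_lt_ω.le n.succ_ne_zero

lemma β_pow_succ_le_β (n : ℕ) : β ^ (n + 1) ≤ β :=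
  pow_le_of_le_one β_pos.le β_lt_one.le n.succ_ne_zero

def embSqrt2 : ℤ√2 →+* ℝ := Zsqrtd.lift ⟨√2, by rw [sqrt_two_mul_self]; norm_num⟩

def conjEmbSqrt2 : ℤ√2 →+* ℝ :=
  Zsqrtd.lift ⟨-√2, by rw [neg_mul_neg, sqrt_two_mul_self]; norm_num⟩

lemma embSqrt2_apply (z : ℤ√2) : embSqrt2 z = z.re + z.im * √2 := rfl

lemma conjEmbSqrt2_apply (z : ℤ√2) : conjEmbSqrt2 z = z.re + z.im * -√2 := rfl

def ωZ : ℤ√2 := ⟨1, 1⟩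

lemma embSqrt2_ωZ : embSqrt2 ωZ = ω := by simp [embSqrt2_apply, ωZ, ω, add_comm]

lemma conjEmbSqrt2_ωZ : conjEmbSqrt2 ωZ = -β := by simp [conjEmbSqrt2_apply, ωZ, β]; ring

lemma embSqrt2_sqrtd : embSqrt2 Zsqrtd.sqrtd = √2 := by simp [embSqrt2_apply]

lemma conjEmbSqrt2_sqrtd : conjEmbSqrt2 Zsqrtd.sqrtd = -√2 := by simp [conjEmbSqrt2_apply]

lemma abs_embSqrt2_ωZ_pow (n : ℕ) : |embSqrt2 (ωZ ^ n)| = ω ^ n := by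
  rw [map_pow, embSqrt2_ωZ, abs_of_pos (pow_pos ω_pos n)]

lemma abs_conjEmbSqrt2_ωZ_pow (n : ℕ) : |conjEmbSqrt2 (ωZ ^ n)| = β ^ n := by
  rw [map_pow, conjEmbSqrt2_ωZ, abs_pow, abs_neg, abs_of_pos β_pos]

lemma rat_add_rat_mul_sqrt_two_inv_mem {a b : ℚ} (hy : (a : ℝ) + b * √2 ≠ 0) :
    ((a : ℝ) + b * √2)⁻¹ ∈ QSqrt2 := by
  have hconj : (a : ℝ) - b * √2 ≠ 0 := by
    rcases eq_or_ne b 0 with rfl | hb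
    · simpa using hy
    · exact ((irrational_sqrt_two.ratCast_mul hb).ratCast_sub a).ne_zero
  have hN : ((a * a - 2 * b * b : ℚ) : ℝ) = ((a : ℝ) + b * √2) * ((a : ℝ) - b * √2) := by
    push_cast; linear_combination (b : ℝ) ^ 2 * sqrt_two_mul_self
  refine ⟨a / (a * a - 2 * b * b), -b / (a * a - 2 * b * b), ?_⟩
  rw [Rat.cast_div, Rat.cast_div, hN, Rat.cast_neg]
  field_simp
  ring

def qSqrt2 : Subfield ℝ where
  carrier := QSqrt2
  mul_mem' := by
    rintro _ _ ⟨a, b, rfl⟩ ⟨c, d, rfl⟩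
    refine ⟨a * c + 2 * b * d, a * d + b * c, ?_⟩
    push_cast
    linear_combination (b * d : ℝ) * sqrt_two_mul_self
  one_mem' := ⟨1, 0, by simp⟩
  add_mem' := by
    rintro _ _ ⟨a, b, rfl⟩ ⟨c, d, rfl⟩
    exact ⟨a + c, b + d, by push_cast; ring⟩
  zero_mem' := ⟨0, 0, by simp⟩
  neg_mem' := by
    rintro _ ⟨a, b, rfl⟩
    exact ⟨-a, -b, by push_cast; ring⟩
  inv_mem' := by
    rintro _ ⟨a, b, rfl⟩
    by_cases hy : (a : ℝ) + b * √2 = 0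
    · exact ⟨0, 0, by simp [hy]⟩
    · exact rat_add_rat_mul_sqrt_two_inv_mem hy

lemma embSqrt2_mem_qSqrt2 (z : ℤ√2) : embSqrt2 z ∈ qSqrt2 :=
  ⟨z.re, z.im, by simp [embSqrt2_apply]⟩

theorem Set.Finite.exists_lt_iterate_eq {α : Type*} {S : Set α} (hS : S.Finite) {f : α → α}
    (hf : MapsTo f S S) {x : α} (hx : x ∈ S) : ∃ m n, m < n ∧ f^[m] x = f^[n] x :=
  Set.Finite.exists_lt_map_eq_of_forall_mem (fun n ↦ hf.iterate n hx) hS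

lemma mem_Icc_ceil_of_abs_le {m : ℤ} {R : ℝ} (h : |(m : ℝ)| ≤ R) : m ∈ Icc (-⌈R⌉) ⌈R⌉ := by
  have hR := Int.le_ceil R
  obtain ⟨h₁, h₂⟩ := abs_le.1 h
  constructor
  · have : -(⌈R⌉ : ℝ) ≤ m := by linarith
    exact_mod_cast this
  · have : (m : ℝ) ≤ ⌈R⌉ := by linarith
    exact_mod_cast this

lemma finite_setOf_abs_embSqrt2_le (R : ℝ) :
    {z : ℤ√2 | |embSqrt2 z| ≤ R ∧ |conjEmbSqrt2 z| ≤ R}.Finite := by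
  refine (((finite_Icc (-⌈R⌉) ⌈R⌉).prod (finite_Icc (-⌈R⌉) ⌈R⌉)).preimage
    (f := fun z : ℤ√2 ↦ (z.re, z.im)) ?_).subset ?_
  · intro z _ w _ h
    exact Zsqrtd.ext (congrArg Prod.fst h) (congrArg Prod.snd h)
  · rintro z ⟨h₁, h₂⟩
    have hre : 2 * (z.re : ℝ) = embSqrt2 z + conjEmbSqrt2 z := by
      rw [embSqrt2_apply, conjEmbSqrt2_apply]; ring
    have him : 2 * (z.im : ℝ) * √2 = embSqrt2 z - conjEmbSqrt2 z := by
      rw [embSqrt2_apply, conjEmbSqrt2_apply]; ring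
    have hre' : |(z.re : ℝ)| ≤ R := by
      have := abs_add_le (embSqrt2 z) (conjEmbSqrt2 z)
      rw [← hre, abs_mul, abs_two] at this
      linarith
    have him' : |(z.im : ℝ)| ≤ R := by
      have := abs_sub (embSqrt2 z) (conjEmbSqrt2 z)
      rw [← him, abs_mul, abs_mul, abs_two, abs_of_pos (Real.sqrt_pos.2 two_pos)] at this
      nlinarith [abs_nonneg (z.im : ℝ), Real.one_lt_sqrt_two]
    exact ⟨mem_Icc_ceil_of_abs_le hre', mem_Icc_ceil_of_abs_le him'⟩

def boundedConjSet (d : ℕ) (B : ℝ) : Set ℝ :=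
  {x | x ∈ Icc 0 √2 ∧ ∃ z : ℤ√2, d * x = embSqrt2 z ∧ |conjEmbSqrt2 z| ≤ B}

lemma finite_boundedConjSet {d : ℕ} (hd : 0 < d) (B : ℝ) : (boundedConjSet d B).Finite := by
  refine ((finite_setOf_abs_embSqrt2_le (max (d * √2) B)).image
    fun z ↦ embSqrt2 z / d).subset ?_
  rintro x ⟨⟨hx₀, hx₁⟩, z, hz, hzB⟩
  have hd' : (0 : ℝ) < d := by exact_mod_cast hd
  refine ⟨z, ⟨?_, hzB.trans (le_max_right _ _)⟩, ?_⟩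
  · rw [← hz, abs_of_nonneg (by positivity)]
    exact (mul_le_mul_of_nonneg_left hx₁ hd'.le).trans (le_max_left _ _)
  · change embSqrt2 z / d = x
    rw [← hz]; field_simp

lemma exists_mem_boundedConjSet {s : ℝ} (hs : s ∈ Icc 0 √2) (hK : s ∈ QSqrt2) :
    ∃ d : ℕ, ∃ B : ℝ, 0 < d ∧ 2 * d ≤ B ∧ s ∈ boundedConjSet d B := by
  obtain ⟨a, b, rfl⟩ := hK
  set z : ℤ√2 := ⟨a.num * b.den, b.num * a.den⟩ with hz
  have ha : (a.den : ℝ) * a = a.num := by exact_mod_cast congrArg ((↑) : ℚ → ℝ) a.den_mul_eq_num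
  have hb : (b.den : ℝ) * b = b.num := by exact_mod_cast congrArg ((↑) : ℚ → ℝ) b.den_mul_eq_num
  refine ⟨a.den * b.den, max (2 * (a.den * b.den : ℕ)) |conjEmbSqrt2 z|, by positivity,
    le_max_left _ _, hs, z, ?_, le_max_right _ _⟩
  rw [hz, embSqrt2_apply]
  push_cast
  linear_combination (b.den : ℝ) * ha + (a.den : ℝ) * √2 * hb

lemma exists_fval_eq (i : ℤ) : ∃ a c : ℤ√2, ω ≤ |embSqrt2 a| ∧ |conjEmbSqrt2 a| ≤ β ∧
    |conjEmbSqrt2 c| ≤ 1 ∧ ∀ s, fval i s = embSqrt2 a * s + embSqrt2 c := by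
  unfold fval Δ
  set n := i.natAbs
  have hωβ := ω_pow_succ_mul_β_pow n
  split_ifs
  · refine ⟨-ωZ ^ (n + 1), ωZ, ?_, ?_, ?_, fun s ↦ ?_⟩
    · rw [map_neg, abs_neg, abs_embSqrt2_ωZ_pow]; exact ω_le_ω_pow_succ n
    · rw [map_neg, abs_neg, abs_conjEmbSqrt2_ωZ_pow]; exact β_pow_succ_le_β n
    · rw [conjEmbSqrt2_ωZ, abs_neg, abs_of_pos β_pos]; exact β_lt_one.le
    · rw [map_neg, map_pow, embSqrt2_ωZ]; linear_combination hωβ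
  · refine ⟨ωZ, -1, ?_, ?_, ?_, fun s ↦ ?_⟩
    · rw [embSqrt2_ωZ, abs_of_pos ω_pos]
    · rw [conjEmbSqrt2_ωZ, abs_neg, abs_of_pos β_pos]
    · simp
    · rw [map_neg, map_one, embSqrt2_ωZ]; linear_combination -β_mul_ω
  · refine ⟨ωZ ^ (n + 1), ωZ - ωZ ^ (n + 1) * Zsqrtd.sqrtd, ?_, ?_, ?_, fun s ↦ ?_⟩
    · rw [abs_embSqrt2_ωZ_pow]; exact ω_le_ω_pow_succ n
    · rw [abs_conjEmbSqrt2_ωZ_pow]; exact β_pow_succ_le_β n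
    · calc |conjEmbSqrt2 (ωZ - ωZ ^ (n + 1) * Zsqrtd.sqrtd)|
          ≤ |conjEmbSqrt2 ωZ| + |conjEmbSqrt2 (ωZ ^ (n + 1))| * |conjEmbSqrt2 Zsqrtd.sqrtd| := by
            rw [map_sub, map_mul, ← abs_mul]; exact abs_sub _ _
        _ ≤ β + β * √2 := by
            rw [conjEmbSqrt2_ωZ, abs_conjEmbSqrt2_ωZ_pow, conjEmbSqrt2_sqrtd, abs_neg, abs_neg,
              abs_of_pos β_pos, abs_of_pos (one_pos.trans Real.one_lt_sqrt_two)]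
            gcongr; exact β_pow_succ_le_β n
        _ = 1 := by rw [← β_mul_ω, ω]; ring
    · rw [map_sub, map_mul, map_pow, embSqrt2_ωZ, embSqrt2_sqrtd]; linear_combination hωβ

lemma ω_pow_succ_mul_mem_Icc (n : ℕ) {u : ℝ} (h₀ : 0 ≤ u) (h₁ : u ≤ β ^ n - β ^ (n + 1)) :
    ω ^ (n + 1) * u ∈ Icc 0 √2 := by
  have hω : 0 < ω ^ (n + 1) := pow_pos ω_pos _
  refine ⟨by positivity, ?_⟩
  calc ω ^ (n + 1) * u ≤ ω ^ (n + 1) * (β ^ n - β ^ (n + 1)) := by gcongr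
    _ = √2 := by rw [mul_sub, ω_pow_succ_mul_β_pow, ω_pow_mul_β_pow, ω]; ring

lemma fval_mem_Icc {i : ℤ} {s : ℝ} (hs : s ∈ Iint i) : fval i s ∈ Icc 0 √2 := by
  unfold Iint at hs
  unfold fval
  split_ifs at hs ⊢ with hneg hzero
  · have hpred : (i - 1).natAbs = i.natAbs + 1 := by omega
    simp only [Δ, hneg, if_true, show i - 1 < 0 by omega, hpred] at hs ⊢
    exact ω_pow_succ_mul_mem_Icc _ (by linarith [hs.2]) (by linarith [hs.1])
  · have h := ω_pow_succ_mul_mem_Icc 0 (u := s - β) (by linarith [hs.1])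
      (by rw [pow_zero, zero_add, pow_one]; linarith [hs.2])
    rwa [zero_add, pow_one] at h
  · have hsucc : (i + 1).natAbs = i.natAbs + 1 := by omega
    simp only [Δ, hneg, hzero, if_false, show ¬i + 1 < 0 by omega, show i + 1 ≠ 0 by omega,
      hsucc] at hs ⊢
    exact ω_pow_succ_mul_mem_Icc _ (by linarith [hs.1]) (by linarith [hs.2])

lemma exists_pow_succ_lt_le_pow {t : ℝ} (h₀ : 0 < t) (hβ : t ≤ β) :
    ∃ n : ℕ, 0 < n ∧ β ^ (n + 1) < t ∧ t ≤ β ^ n := by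
  obtain ⟨n, hlt, hle⟩ := exists_nat_pow_near_of_lt_one h₀ (hβ.trans β_lt_one.le) β_pos β_lt_one
  refine ⟨n, Nat.pos_of_ne_zero ?_, hlt, hle⟩
  rintro rfl
  exact (hβ.trans_lt (by simpa using hlt)).false

lemma exists_mem_Iint {s : ℝ} (hs : s ∈ Ioo 0 √2) : ∃ i, s ∈ Iint i := by
  rcases le_or_gt s β with hsβ | hβs
  · obtain ⟨n, hn, hlt, hle⟩ := exists_pow_succ_lt_le_pow hs.1 hsβ
    refine ⟨-n, ?_⟩
    simp only [Iint, Δ, show -(n : ℤ) < 0 by omega, show -(n : ℤ) - 1 < 0 by omega, if_true,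
      show (-(n : ℤ) - 1).natAbs = n + 1 by omega, Int.natAbs_neg, Int.natAbs_natCast]
    exact ⟨hlt, hle⟩
  rcases lt_or_ge s 1 with hs1 | h1s
  · exact ⟨0, by simpa [Iint] using ⟨hβs, hs1⟩⟩
  · obtain ⟨n, hn, hlt, hle⟩ :=
      exists_pow_succ_lt_le_pow (t := √2 - s) (by linarith [hs.2]) (by simp only [β]; linarith)
    refine ⟨n, ?_⟩
    simp only [Iint, Δ, show ¬(n : ℤ) < 0 by omega, show (n : ℤ) ≠ 0 by omega,
      show ¬(n : ℤ) + 1 < 0 by omega, show (n : ℤ) + 1 ≠ 0 by omega, if_false,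
      show ((n : ℤ) + 1).natAbs = n + 1 by omega, Int.natAbs_natCast]
    exact ⟨by linarith, by linarith⟩

namespace IsLuroth

variable {f : ℝ → ℝ}

lemma eq_zero_or_eq_sqrt_two_or_eq_fval (hf : IsLuroth f) {s : ℝ} (hs : s ∈ Icc 0 √2) :
    s = 0 ∨ s = √2 ∨ ∃ i, s ∈ Iint i ∧ f s = fval i s := by
  rcases hs.1.eq_or_lt with rfl | h₀
  · exact Or.inl rfl
  rcases hs.2.eq_or_lt with rfl | h₂
  · exact Or.inr (Or.inl rfl)
  obtain ⟨i, hi⟩ := exists_mem_Iint ⟨h₀, h₂⟩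
  exact Or.inr (Or.inr ⟨i, hi, hf.2.2 i s hi⟩)

lemma mapsTo_Icc (hf : IsLuroth f) : MapsTo f (Icc 0 √2) (Icc 0 √2) := by
  intro s hs
  have hzero : (0 : ℝ) ∈ Icc 0 √2 := ⟨le_rfl, Real.sqrt_nonneg 2⟩
  rcases hf.eq_zero_or_eq_sqrt_two_or_eq_fval hs with rfl | rfl | ⟨i, hi, hfs⟩
  · rwa [hf.1]
  · rwa [hf.2.1]
  · exact hfs ▸ fval_mem_Icc hi

lemma exists_affine (hf : IsLuroth f) {s : ℝ} (hs : s ∈ Icc 0 √2) :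
    ∃ a c : ℤ√2, ω ≤ |embSqrt2 a| ∧ |conjEmbSqrt2 a| ≤ β ∧ |conjEmbSqrt2 c| ≤ 1 ∧
      f s = embSqrt2 a * s + embSqrt2 c := by
  have hωZ : ω ≤ |embSqrt2 ωZ| := by rw [embSqrt2_ωZ, abs_of_pos ω_pos]
  have hωZ' : |conjEmbSqrt2 ωZ| ≤ β := by rw [conjEmbSqrt2_ωZ, abs_neg, abs_of_pos β_pos]
  rcases hf.eq_zero_or_eq_sqrt_two_or_eq_fval hs with rfl | rfl | ⟨i, -, hfs⟩
  · exact ⟨ωZ, 0, hωZ, hωZ', by simp, by simp [hf.1]⟩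
  · refine ⟨ωZ, -(ωZ * Zsqrtd.sqrtd), hωZ, hωZ', ?_, ?_⟩
    · rw [map_neg, map_mul, conjEmbSqrt2_ωZ, conjEmbSqrt2_sqrtd, abs_neg, neg_mul_neg,
        ← β_mul_ω, abs_of_pos (mul_pos β_pos (Real.sqrt_pos.2 two_pos))]
      exact mul_le_mul_of_nonneg_left (by unfold ω; linarith) β_pos.le
    · rw [hf.2.1, map_neg, map_mul, embSqrt2_sqrtd]; ring
  · obtain ⟨a, c, ha, ha', hc, hfval⟩ := exists_fval_eq i
    exact ⟨a, c, ha, ha', hc, hfs.trans (hfval s)⟩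

lemma exists_iterate_affine (hf : IsLuroth f) {s : ℝ} (hs : s ∈ Icc 0 √2) (j : ℕ) :
    ∃ A C : ℤ√2, ω ^ j ≤ |embSqrt2 A| ∧ f^[j] s = embSqrt2 A * s + embSqrt2 C := by
  induction j with
  | zero => exact ⟨1, 0, by simp, by simp⟩
  | succ j ih =>
    obtain ⟨A, C, hA, hj⟩ := ih
    obtain ⟨a, c, ha, -, -, hfa⟩ := hf.exists_affine (hf.mapsTo_Icc.iterate j hs)
    refine ⟨a * A, a * C + c, ?_, ?_⟩
    · rw [map_mul, abs_mul, pow_succ']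
      exact mul_le_mul ha hA (pow_pos ω_pos j).le (abs_nonneg _)
    · rw [Function.iterate_succ_apply', hfa, hj, map_add, map_mul, map_mul]; ring

lemma mem_qSqrt2_of_iterate_mem (hf : IsLuroth f) {s : ℝ} (hs : s ∈ Icc 0 √2) {m : ℕ}
    (h : f^[m] s ∈ qSqrt2) : s ∈ qSqrt2 := by
  obtain ⟨A, C, hA, hm⟩ := hf.exists_iterate_affine hs m
  have hA₀ : embSqrt2 A ≠ 0 :=
    abs_pos.1 ((pow_pos ω_pos m).trans_le hA)
  have hs_eq : s = (f^[m] s - embSqrt2 C) / embSqrt2 A := by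
    rw [hm]; field_simp; ring
  rw [hs_eq]
  exact div_mem (sub_mem h (embSqrt2_mem_qSqrt2 C)) (embSqrt2_mem_qSqrt2 A)

lemma mem_qSqrt2_of_isPeriodicPt (hf : IsLuroth f) {t : ℝ} (ht : t ∈ Icc 0 √2) {p : ℕ}
    (hp : 0 < p) (hper : Function.IsPeriodicPt f p t) : t ∈ qSqrt2 := by
  obtain ⟨A, C, hA, hpA⟩ := hf.exists_iterate_affine ht p
  have hA₁ : 1 - embSqrt2 A ≠ 0 := by
    refine sub_ne_zero.2 fun h ↦ ?_
    have : ω ≤ 1 := by simpa [← h] using (le_self_pow₀ one_lt_ω.le hp.ne').trans hA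
    exact this.not_gt one_lt_ω
  have ht_eq : t = embSqrt2 C / (1 - embSqrt2 A) := by
    have hfix : f^[p] t = t := hper
    rw [eq_div_iff hA₁]; linear_combination hpA - hfix
  rw [ht_eq]
  exact div_mem (embSqrt2_mem_qSqrt2 C) (sub_mem (one_mem _) (embSqrt2_mem_qSqrt2 A))

lemma mapsTo_boundedConjSet (hf : IsLuroth f) {d : ℕ} {B : ℝ}
    (hB : 2 * d ≤ B) : MapsTo f (boundedConjSet d B) (boundedConjSet d B) := by
  rintro x ⟨hx, z, hz, hzB⟩
  obtain ⟨a, c, -, ha, hc, hfx⟩ := hf.exists_affine hx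
  refine ⟨hf.mapsTo_Icc hx, a * z + d * c, ?_, ?_⟩
  · rw [hfx, map_add, map_mul, map_mul, map_natCast, ← hz]; ring
  · have hβ : β ≤ 1 / 2 := by simp only [β]; linarith [Real.sqrt_two_lt_three_halves]
    have hB₀ : 0 ≤ B := le_trans (by positivity) hB
    calc |conjEmbSqrt2 (a * z + d * c)|
        ≤ |conjEmbSqrt2 a| * |conjEmbSqrt2 z| + d * |conjEmbSqrt2 c| := by
          rw [map_add, map_mul, map_mul, map_natCast, ← abs_mul, ← Nat.abs_cast d, ← abs_mul,
            Nat.abs_cast]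
          exact abs_add_le _ _
      _ ≤ 1 / 2 * B + d * 1 := by gcongr; exact ha.trans hβ
      _ ≤ B := by linarith

end IsLuroth

/-- for every `s ∈ [0,√2]`, the orbit of `s` under `f` is eventually
periodic iff `s ∈ ℚ(√2)`. -/
theorem luroth_eventually_periodic_iff_mem_Qsqrt2
    (f : ℝ → ℝ) (hf : IsLuroth f) :
    ∀ s ∈ Set.Icc (0 : ℝ) (Real.sqrt 2),
      (∃ m n : ℕ, m < n ∧ f^[m] s = f^[n] s) ↔ s ∈ QSqrt2 := by
  intro s hs
  constructor
  · rintro ⟨m, n, hmn, hmn_eq⟩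
    have hper : Function.IsPeriodicPt f (n - m) (f^[m] s) := by
      rw [Function.IsPeriodicPt, Function.IsFixedPt, ← Function.iterate_add_apply,
        Nat.sub_add_cancel hmn.le, hmn_eq]
    exact hf.mem_qSqrt2_of_iterate_mem hs
      (hf.mem_qSqrt2_of_isPeriodicPt (hf.mapsTo_Icc.iterate m hs) (Nat.sub_pos_of_lt hmn) hper)
  · intro hK
    obtain ⟨d, B, hd, hB, hsB⟩ := exists_mem_boundedConjSet hs hK
    exact (finite_boundedConjSet hd B).exists_lt_iterate_eq (hf.mapsTo_boundedConjSet hB) hsB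
end
end

section
/- For all i, j ∈ ℤ with (i, j) ≠ (0, 0) and every s ∈ I_{i,j}, the second iterate of f satisfies: f(f(s)) = ω^{|i|+|j|+2}·(Δ_{i,j} − s) if j < 0 or (j = 0 and i < 0), and f(f(s)) = ω^{|i|+|j|+2}·(s − Δ_{i,j}) if j > 0 or (j = 0 and i > 0). Moreover, for every s in the interval (β + β², 2β), one has f(f(s)) = ω²·(s − (β + β²)). Thus the piecewise-affine renormalization function r coincides with the second iterate f² of f. -/
noncomputable section

/-- Base case of `Δ_{i,j}` (for `i ≤ 0`): the two explicit formulas. -/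
def Δ2base (i j : ℤ) : ℝ :=
  if j ≤ 0 then β ^ (i.natAbs + 1) + β ^ (i.natAbs + j.natAbs + 1)
  else β ^ i.natAbs - β ^ (i.natAbs + j.natAbs + 1)

/-- The break points `Δ_{i,j}`. -/
def Δ2 (i j : ℤ) : ℝ :=
  if 0 < i ∨ (i = 0 ∧ 0 < j) then Real.sqrt 2 - Δ2base (-i) (-j)
  else Δ2base i j

/-- The intervals `I_{i,j}`. -/
def I2 (i j : ℤ) : Set ℝ :=
  if j < 0 then Set.Ioc (Δ2 i (j - 1)) (Δ2 i j)
  else if j = 0 then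
    (if i < 0 then Set.Ioo (Δ2 i (-1)) (Δ2 i 0) else Set.Ioo (Δ2 i 0) (Δ2 i 1))
  else Set.Ico (Δ2 i j) (Δ2 i (j + 1))

/-!
On `I_k` the map `f` is affine with slope `±ω^{|k|+1}` (negative exactly for `k < 0`), and its
affine extension sends `Δ_{i,j}` to the break point `Δ_{j'}`, where `j' = -j` if `i < 0` (where `f`
reverses orientation) and `j' = j` otherwise. Hence `f` maps `I_{i,j}` into `I_{j'}`, and there
`f ∘ f` is the composite of two affine maps through `Δ_{i,j} ↦ Δ_{j'}`, with slope the product of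
the two slopes. That `I_{i,j} ⊆ I_i` needs no separate estimate: `I_i` is, up to endpoints, the
preimage of `(0, √2)` under the affine extension of `f|I_i`. The interval `(β + β², 2β)` is
handled the same way, with `i = j' = 0` and `β + β² ↦ Δ_0`.
-/

open Set

lemma β_add_one : β + 1 = √2 := by rw [β]; ring

lemma ω_eq_β_add_two : ω = β + 2 := by rw [ω, β]; ring

lemma ω_pow_succ_mul_β_pow_add (n m : ℕ) : ω ^ (n + 1) * β ^ (n + m + 1) = β ^ m := by
  linear_combination β ^ m * ω_pow_mul_β_pow (n + 1)

lemma ω_pow_succ_mul_sub (n : ℕ) : ω ^ (n + 1) * (β ^ n - β ^ (n + 1)) = √2 := by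
  linear_combination ω * ω_pow_mul_β_pow n - ω_pow_mul_β_pow (n + 1) + ω_eq_β_add_two +
    β_add_one

lemma Δ_of_neg {k : ℤ} (hk : k < 0) : Δ k = β ^ k.natAbs := by rw [Δ, if_pos hk]

lemma Δ_of_nonneg {k : ℤ} (hk : 0 ≤ k) : Δ k = √2 - β ^ k.natAbs := by
  rw [Δ, if_neg hk.not_gt]
  split_ifs with h
  · rw [h, Int.natAbs_zero, pow_zero, ← β_add_one]; ring
  · rfl

lemma Δ_zero : Δ 0 = β := by rw [Δ, if_neg (lt_irrefl 0), if_pos rfl]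

lemma Δ_one : Δ 1 = 1 := by rw [Δ_of_nonneg zero_le_one, ← β_add_one]; ring

lemma Δ_pos (k : ℤ) : 0 < Δ k := by
  rcases lt_or_ge k 0 with hk | hk
  · rw [Δ_of_neg hk]; exact pow_pos β_pos _
  · rw [Δ_of_nonneg hk]
    linarith [pow_le_one₀ β_pos.le β_lt_one.le (n := k.natAbs), Real.one_lt_sqrt_two]

lemma Δ_lt_sqrt_two (k : ℤ) : Δ k < √2 := by
  rcases lt_or_ge k 0 with hk | hk
  · rw [Δ_of_neg hk]
    linarith [pow_le_one₀ β_pos.le β_lt_one.le (n := k.natAbs), Real.one_lt_sqrt_two]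
  · rw [Δ_of_nonneg hk]; linarith [pow_pos β_pos k.natAbs]

lemma Iint_subset_Ioo (k : ℤ) : Iint k ⊆ Ioo 0 √2 := by
  intro s hs
  unfold Iint at hs
  split_ifs at hs
  · exact ⟨(Δ_pos _).trans hs.1, hs.2.trans_lt (Δ_lt_sqrt_two k)⟩
  · exact ⟨β_pos.trans hs.1, hs.2.trans Real.one_lt_sqrt_two⟩
  · exact ⟨(Δ_pos k).trans_le hs.1, hs.2.trans (Δ_lt_sqrt_two _)⟩

def lurothSlope (k : ℤ) : ℝ := if k < 0 then -ω ^ (k.natAbs + 1) else ω ^ (k.natAbs + 1)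

lemma lurothSlope_zero : lurothSlope 0 = ω := by
  rw [lurothSlope, if_neg (lt_irrefl 0), Int.natAbs_zero, zero_add, pow_one]

lemma fval_eq (k : ℤ) (s : ℝ) : fval k s = lurothSlope k * (s - Δ k) := by
  unfold fval lurothSlope
  split_ifs with h0 h1
  · ring
  · rw [h1, Δ_zero]; ring
  · rfl

lemma fval_sub_fval (k : ℤ) (s t : ℝ) : fval k s - fval k t = lurothSlope k * (s - t) := by
  rw [fval_eq, fval_eq]; ring

lemma fval_strictMono {k : ℤ} (hk : 0 ≤ k) : StrictMono (fval k) := fun s t hst => by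
  have hslope : 0 < lurothSlope k := by
    rw [lurothSlope, if_neg hk.not_gt]; exact pow_pos ω_pos _
  nlinarith [fval_sub_fval k t s]

lemma fval_strictAnti {k : ℤ} (hk : k < 0) : StrictAnti (fval k) := fun s t hst => by
  have hslope : lurothSlope k < 0 := by
    rw [lurothSlope, if_pos hk]; exact neg_neg_of_pos (pow_pos ω_pos _)
  nlinarith [fval_sub_fval k t s]

lemma fval_Δ_self (k : ℤ) : fval k (Δ k) = 0 := by rw [fval_eq, sub_self, mul_zero]

lemma fval_Δ_outer (k : ℤ) : fval k (Δ (if k < 0 then k - 1 else k + 1)) = √2 := by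
  rw [fval_eq, lurothSlope]
  split_ifs with hk
  · rw [Δ_of_neg hk, Δ_of_neg (by omega), show (k - 1).natAbs = k.natAbs + 1 by omega]
    linear_combination ω_pow_succ_mul_sub k.natAbs
  · rw [Δ_of_nonneg (by omega), Δ_of_nonneg (by omega),
      show (k + 1).natAbs = k.natAbs + 1 by omega]
    linear_combination ω_pow_succ_mul_sub k.natAbs

lemma mem_Iint_of_fval_mem_Ioo {k : ℤ} {s : ℝ} (hs : fval k s ∈ Ioo 0 √2) : s ∈ Iint k := by
  obtain ⟨h0, h1⟩ := hs
  rw [← fval_Δ_self k] at h0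
  rw [← fval_Δ_outer k] at h1
  unfold Iint
  rcases lt_trichotomy k 0 with hk | rfl | hk
  · rw [if_pos hk] at h1 ⊢
    exact ⟨(fval_strictAnti hk).lt_iff_gt.1 h1, ((fval_strictAnti hk).lt_iff_gt.1 h0).le⟩
  · rw [if_neg (lt_irrefl 0), zero_add, Δ_one] at h1
    exact ⟨(fval_strictMono le_rfl).lt_iff_lt.1 h0, (fval_strictMono le_rfl).lt_iff_lt.1 h1⟩
  · rw [if_neg hk.not_gt] at h1
    rw [if_neg hk.not_gt, if_neg hk.ne']
    exact ⟨((fval_strictMono hk.le).lt_iff_lt.1 h0).le, (fval_strictMono hk.le).lt_iff_lt.1 h1⟩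

lemma Δ2_of_nonpos_of_nonpos {i j : ℤ} (hi : i ≤ 0) (hj : j ≤ 0) :
    Δ2 i j = β ^ (i.natAbs + 1) + β ^ (i.natAbs + j.natAbs + 1) := by
  rw [Δ2, if_neg (by omega), Δ2base, if_pos hj]

lemma Δ2_of_neg_of_pos {i j : ℤ} (hi : i < 0) (hj : 0 < j) :
    Δ2 i j = β ^ i.natAbs - β ^ (i.natAbs + j.natAbs + 1) := by
  rw [Δ2, if_neg (by omega), Δ2base, if_neg hj.not_ge]

lemma Δ2_eq_sqrt_two_sub {i j : ℤ} (h : 0 < i ∨ (i = 0 ∧ 0 < j)) :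
    Δ2 i j = √2 - Δ2 (-i) (-j) := by
  rw [Δ2, if_pos h, Δ2, if_neg (by omega)]

lemma fval_Δ2 {i j : ℤ} (hij : ¬(i = 0 ∧ j = 0)) :
    fval i (Δ2 i j) = Δ (if i < 0 then -j else j) := by
  rw [fval_eq, lurothSlope]
  rcases lt_or_ge i 0 with hi | hi
  · rw [if_pos hi, if_pos hi, Δ_of_neg hi]
    rcases le_or_gt j 0 with hj | hj
    · rw [Δ2_of_nonpos_of_nonpos hi.le hj, Δ_of_nonneg (by omega), Int.natAbs_neg]
      linear_combination ω_pow_succ_mul_sub i.natAbs - ω_pow_succ_mul_β_pow_add i.natAbs j.natAbs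
    · rw [Δ2_of_neg_of_pos hi hj, Δ_of_neg (by omega), Int.natAbs_neg]
      linear_combination ω_pow_succ_mul_β_pow_add i.natAbs j.natAbs
  rw [if_neg hi.not_gt, if_neg hi.not_gt, Δ_of_nonneg hi]
  by_cases hsymm : 0 < i ∨ (i = 0 ∧ 0 < j)
  · rw [Δ2_eq_sqrt_two_sub hsymm]
    rcases lt_or_ge j 0 with hj | hj
    · rw [Δ2_of_neg_of_pos (by omega) (by omega), Δ_of_neg hj, Int.natAbs_neg, Int.natAbs_neg]
      linear_combination ω_pow_succ_mul_β_pow_add i.natAbs j.natAbs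
    · rw [Δ2_of_nonpos_of_nonpos (by omega) (by omega), Δ_of_nonneg hj, Int.natAbs_neg,
        Int.natAbs_neg]
      linear_combination ω_pow_succ_mul_sub i.natAbs - ω_pow_succ_mul_β_pow_add i.natAbs j.natAbs
  · obtain ⟨rfl, hj⟩ : i = 0 ∧ j < 0 := by omega
    rw [Δ2_of_nonpos_of_nonpos le_rfl hj.le, Δ_of_neg hj]
    linear_combination ω_pow_succ_mul_β_pow_add 0 j.natAbs + ω * β_add_one

lemma fval_mem_Iint_of_mem_I2 {i j : ℤ} (hij : ¬(i = 0 ∧ j = 0)) {s : ℝ} (hs : s ∈ I2 i j) :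
    fval i s ∈ Iint (if i < 0 then -j else j) := by
  have hΔ2 : ∀ k, ¬(i = 0 ∧ k = 0) → fval i (Δ2 i k) = Δ (if i < 0 then -k else k) :=
    fun k hk => fval_Δ2 hk
  unfold I2 at hs
  rcases lt_or_ge i 0 with hi | hi
  · have hanti := fval_strictAnti hi
    simp only [if_pos hi] at hΔ2 ⊢
    rcases lt_trichotomy j 0 with hj | rfl | hj
    · rw [if_pos hj] at hs
      rw [Iint, if_neg (by omega), if_neg (by omega), ← hΔ2 j (by omega),
        show -j + 1 = -(j - 1) by ring, ← hΔ2 (j - 1) (by omega)]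
      exact ⟨hanti.antitone hs.2, hanti hs.1⟩
    · rw [if_neg (lt_irrefl 0), if_pos rfl, if_pos hi] at hs
      rw [neg_zero, Iint, if_neg (lt_irrefl 0), if_pos rfl, ← Δ_zero, ← Δ_one, ← neg_zero,
        ← hΔ2 0 (by omega), ← neg_neg (1 : ℤ), ← hΔ2 (-1) (by omega)]
      exact ⟨hanti hs.2, hanti hs.1⟩
    · rw [if_neg hj.not_gt, if_neg hj.ne'] at hs
      rw [Iint, if_pos (by omega), ← hΔ2 j (by omega), show -j - 1 = -(j + 1) by ring,
        ← hΔ2 (j + 1) (by omega)]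
      exact ⟨hanti hs.2, hanti.antitone hs.1⟩
  · have hmono := fval_strictMono hi
    simp only [if_neg hi.not_gt] at hΔ2 ⊢
    rcases lt_trichotomy j 0 with hj | rfl | hj
    · rw [if_pos hj] at hs
      rw [Iint, if_pos hj, ← hΔ2 j (by omega), ← hΔ2 (j - 1) (by omega)]
      exact ⟨hmono hs.1, hmono.monotone hs.2⟩
    · rw [if_neg (lt_irrefl 0), if_pos rfl, if_neg hi.not_gt] at hs
      rw [Iint, if_neg (lt_irrefl 0), if_pos rfl, ← Δ_zero, ← Δ_one, ← hΔ2 0 (by omega),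
        ← hΔ2 1 (by omega)]
      exact ⟨hmono hs.1, hmono hs.2⟩
    · rw [if_neg hj.not_gt, if_neg hj.ne'] at hs
      rw [Iint, if_neg hj.not_gt, if_neg hj.ne', ← hΔ2 j (by omega), ← hΔ2 (j + 1) (by omega)]
      exact ⟨hmono.monotone hs.1, hmono hs.2⟩

lemma IsLuroth.apply_apply_eq {f : ℝ → ℝ} (hf : IsLuroth f) {i k : ℤ} {s a : ℝ}
    (hs : fval i s ∈ Iint k) (ha : fval i a = Δ k) :
    f (f s) = lurothSlope k * lurothSlope i * (s - a) := by
  have hsi : s ∈ Iint i := mem_Iint_of_fval_mem_Ioo (Iint_subset_Ioo k hs)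
  rw [hf.2.2 i s hsi, hf.2.2 k _ hs, fval_eq k, ← ha, fval_sub_fval]
  ring

lemma lurothSlope_mul_lurothSlope (i j : ℤ) :
    lurothSlope (if i < 0 then -j else j) * lurothSlope i =
      (if j < 0 ∨ (j = 0 ∧ i < 0) then -1 else 1) * ω ^ (i.natAbs + j.natAbs + 2) := by
  unfold lurothSlope
  split_ifs <;> first | (exfalso; omega) | (rw [Int.natAbs_neg]; ring) | ring

/-- the renormalization function `r` coincides with `f ∘ f`:
for `(i,j) ≠ (0,0)` and `s ∈ I_{i,j}`, the second iterate of `f` is the stated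
affine function of `s`, and on `(β + β², 2β)` it equals `ω²(s - (β + β²))`. -/
theorem luroth_second_iterate_renormalization (f : ℝ → ℝ) (hf : IsLuroth f) :
    (∀ i j : ℤ, ¬(i = 0 ∧ j = 0) → ∀ s ∈ I2 i j,
      ((j < 0 ∨ (j = 0 ∧ i < 0)) →
        f (f s) = ω ^ (i.natAbs + j.natAbs + 2) * (Δ2 i j - s)) ∧
      ((0 < j ∨ (j = 0 ∧ 0 < i)) →
        f (f s) = ω ^ (i.natAbs + j.natAbs + 2) * (s - Δ2 i j))) ∧
    (∀ s ∈ Set.Ioo (β + β ^ 2) (2 * β),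
      f (f s) = ω ^ 2 * (s - (β + β ^ 2))) := by
  refine ⟨fun i j hij s hs => ?_, fun s hs => ?_⟩
  · have h := hf.apply_apply_eq (fval_mem_Iint_of_mem_I2 hij hs) (fval_Δ2 hij)
    rw [lurothSlope_mul_lurothSlope] at h
    refine ⟨fun hneg => ?_, fun hpos => ?_⟩
    · rw [h, if_pos hneg]; ring
    · rw [h, if_neg (by omega)]; ring
  · have hmono := fval_strictMono (le_refl (0 : ℤ))
    have hleft : fval 0 (β + β ^ 2) = Δ 0 := by
      rw [fval_eq, lurothSlope_zero, Δ_zero]; linear_combination β * β_mul_ω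
    have hright : fval 0 (2 * β) = 1 := by
      rw [fval_eq, lurothSlope_zero, Δ_zero]; linear_combination β_mul_ω
    have hs0 : fval 0 s ∈ Iint 0 := by
      rw [Iint, if_neg (lt_irrefl 0), if_pos rfl, ← Δ_zero, ← hleft, ← hright]
      exact ⟨hmono hs.1, hmono hs.2⟩
    rw [hf.apply_apply_eq hs0 hleft, lurothSlope_zero]
    ring
end
end
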